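/- Let (G, s, t, ℓ, R) be a YES-instance of CSMP-1 with s ≠ t in which every free component has at most λ vertices, where for this statement the main robot's starting vertex s is also counted as occupied. Let S be a solution with the minimum number of moves and let G_S be the subgraph of G consisting of all edges of the paths traversed during S. Then every path in G_S that starts at s has length at most ℓ·(λ+1); consequently every vertex of G_S is at distance at most ℓ·(λ+1) from s in G. -/

import Mathlib

open SimpleGraph

/-- A CSMP-1 instance: a graph `G`, the starting vertex `s` and destination `t` of
the main robot, the budget `ℓ`, and the set `blk` of vertices initially occupied by
the blocker robots (the robots other than the main robot). -/
structure OneInst (V : Type) where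
  G : SimpleGraph V
  s : V
  t : V
  ell : ℕ
  blk : Set V

variable {V : Type} [DecidableEq V]

/-- A valid instance: the graph is connected and the robots occupy pairwise
distinct vertices. -/
def OneInst.Valid (I : OneInst V) : Prop := I.G.Connected ∧ I.s ∉ I.blk

/-- The edges of a walk that is recorded as a list of consecutively visited vertices. -/
def listEdges {V : Type} (l : List V) : Set (Sym2 V) :=
  {e | ∃ ab ∈ l.zip l.tail, e = s(ab.1, ab.2)}

/-- One move: either the main robot (currently at `m`, with blockers occupying `o`)
slides along a simple path `l` of `G` (recorded as the list of visited vertices)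
from `m` to a different vertex `m'`, no vertex of the path carrying a blocker, or a
blocker slides along such a path, which contains neither the main robot nor any
other blocker. -/
def Step1 {V : Type} (G : SimpleGraph V) (m : V) (o : Set V) (m' : V) (o' : Set V)
    (l : List V) : Prop :=
  l.Chain' G.Adj ∧ l.Nodup ∧ 2 ≤ l.length ∧
    ((l.head? = some m ∧ l.getLast? = some m' ∧ o' = o ∧ ∀ v ∈ l, v ∉ o) ∨
      (∃ x y, x ∈ o ∧ l.head? = some x ∧ l.getLast? = some y ∧
        o' = insert y (o \ {x}) ∧ m' = m ∧ m ∉ l ∧ ∀ v ∈ l, v ∈ o → v = x))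

/-- A schedule for a CSMP-1 instance: a sequence of `q` moves; `main j` is the
position of the main robot and `occ j` the set of positions of the blockers at the
end of time step `j`, and `wlk j` is the path traversed at time step `j + 1`. -/
structure Sched1 {V : Type} (G : SimpleGraph V) (s : V) (blk : Set V) where
  q : ℕ
  main : ℕ → V
  occ : ℕ → Set V
  wlk : ℕ → List V
  main0 : main 0 = s
  occ0 : occ 0 = blk
  step : ∀ j < q, Step1 G (main j) (occ j) (main (j + 1)) (occ (j + 1)) (wlk j)

/-- A solution: a sequence of at most `ℓ` moves at whose end the main robot
occupies `t`. -/
def Sol1 (I : OneInst V) (S : Sched1 I.G I.s I.blk) : Prop :=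
  S.q ≤ I.ell ∧ S.main S.q = I.t

/-- A YES-instance of CSMP-1. -/
def OneInst.Yes (I : OneInst V) : Prop := ∃ S : Sched1 I.G I.s I.blk, Sol1 I S

/-- `G_S`: the subgraph of `G` consisting of all edges of the paths traversed
during the schedule `S`. -/
def GS1 {V : Type} {G : SimpleGraph V} {s : V} {blk : Set V} (S : Sched1 G s blk) :
    SimpleGraph V :=
  SimpleGraph.fromEdgeSet {e | ∃ j < S.q, e ∈ listEdges (S.wlk j)}

/-- The blocker-distance between `v` and `w`: the minimum number of blocker
vertices on a `v`-`w` path of `G`. -/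
noncomputable def blockd {V : Type} (G : SimpleGraph V) (blk : Set V) (v w : V) : ℕ :=
  sInf {m | ∃ z : G.Walk v w, z.IsPath ∧ {x | x ∈ z.support ∧ x ∈ blk}.ncard = m}

/-- The set of free vertices: the vertices initially occupied by no robot. -/
def freeSet (I : OneInst V) : Set V := {v | v ∉ I.blk ∧ v ≠ I.s}

section CSMPAux

variable {G : SimpleGraph V} {s : V} {blk : Set V}

lemma mem_of_listEdges {l : List V} {e : Sym2 V} (he : e ∈ listEdges l) :
    ∀ v ∈ e, v ∈ l := by
  obtain ⟨⟨a, b⟩, hab, rfl⟩ := he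
  obtain ⟨h1, h2⟩ := List.of_mem_zip hab
  intro v hv
  rcases Sym2.mem_iff.1 hv with rfl | rfl
  · exact h1
  · exact List.mem_of_mem_tail h2

lemma consec_mem_listEdges (l : List V) (i : ℕ) (h : i + 1 < l.length) :
    s(l.get ⟨i, by omega⟩, l.get ⟨i+1, h⟩) ∈ listEdges l := by
  refine ⟨(l.get ⟨i, by omega⟩, l.get ⟨i+1, h⟩), ?_, rfl⟩
  have hlen : i < (l.zip l.tail).length := by
    simp [List.length_zip, List.length_tail]; omega
  have : (l.zip l.tail).get ⟨i, hlen⟩ = (l.get ⟨i, by omega⟩, l.get ⟨i+1, h⟩) := by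
    simp [List.getElem_zip]
  rw [← this]; exact List.get_mem _ _

lemma head_mem {l : List V} {v : V} (h : l.head? = some v) : v ∈ l :=
  List.mem_of_mem_head? (Option.mem_def.2 h)

lemma getLast_mem {l : List V} {v : V} (h : l.getLast? = some v) : v ∈ l :=
  List.mem_of_mem_getLast? (Option.mem_def.2 h)

lemma head_ne_last {l : List V} (h : l.Nodup) (hl : 2 ≤ l.length) {x y : V}
    (hx : l.head? = some x) (hy : l.getLast? = some y) : x ≠ y := by
  rw [List.head?_eq_getElem?, List.getElem?_eq_some_iff] at hx
  rw [List.getLast?_eq_getElem?, List.getElem?_eq_some_iff] at hy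
  obtain ⟨hx1, hx2⟩ := hx; obtain ⟨hy1, hy2⟩ := hy
  intro he
  have h3 := List.Nodup.getElem_inj_iff h (i := 0) (j := l.length - 1)
    (hi := hx1) (hj := hy1)
  rw [hx2, hy2, ← he] at h3
  have h2 := h3.1 rfl
  omega

lemma chain'_of_zip {R : V → V → Prop} {l : List V} (hc : l.Chain' R) {c d : V}
    (h : (c, d) ∈ l.zip l.tail) : R c d := by
  obtain ⟨i, hi⟩ := List.mem_iff_get.1 h
  have hlen : (i : ℕ) + 1 < l.length := by
    have := i.2
    simp [List.length_zip, List.length_tail] at this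
    omega
  simp only [List.get_eq_getElem, List.getElem_zip, List.getElem_tail, Prod.mk.injEq] at hi
  have hc' := List.isChain_iff_getElem.1 hc i (by omega)
  rw [← hi.1, ← hi.2]
  exact hc'

lemma GS_adj_imp {S : Sched1 G s blk} {a b : V} (h : (GS1 S).Adj a b) :
    G.Adj a b ∧ ∃ j < S.q, a ∈ S.wlk j ∧ b ∈ S.wlk j := by
  rw [GS1, fromEdgeSet_adj] at h
  obtain ⟨⟨j, hj, hej⟩, hne⟩ := h
  have ha := mem_of_listEdges hej a (by simp)
  have hb := mem_of_listEdges hej b (by simp)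
  refine ⟨?_, j, hj, ha, hb⟩
  have hch := (S.step j hj).1
  obtain ⟨⟨c, d⟩, hcd, heq⟩ := hej
  have hadj : G.Adj c d := chain'_of_zip hch hcd
  have := Sym2.eq_iff.1 heq
  rcases this with ⟨rfl, rfl⟩ | ⟨rfl, rfl⟩
  · exact hadj
  · exact hadj.symm

lemma GS_le (S : Sched1 G s blk) : GS1 S ≤ G := fun _ _ h => (GS_adj_imp h).1

lemma wlk_chain' (S : Sched1 G s blk) {j : ℕ} (hj : j < S.q) :
    (S.wlk j).Chain' (GS1 S).Adj := by
  obtain ⟨hch, hnd, hlen, -⟩ := S.step j hj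
  refine List.isChain_iff_getElem.2 ?_
  intro i hi
  rw [GS1, fromEdgeSet_adj]
  constructor
  · exact ⟨j, hj, consec_mem_listEdges _ i (by omega)⟩
  · intro he
    have := (List.Nodup.getElem_inj_iff hnd).1 he
    omega

lemma chain'_head_reachable {H : SimpleGraph V} :
    ∀ {l : List V}, l.Chain' H.Adj → ∀ {x : V}, l.head? = some x →
      ∀ a ∈ l, H.Reachable x a := by
  intro l
  induction l with
  | nil => simp
  | cons z xs ih =>
      intro hc x hx a ha
      simp only [List.head?_cons, Option.some.injEq] at hx
      subst hx
      rcases List.mem_cons.1 ha with rfl | ha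
      · exact Reachable.refl _
      · cases xs with
        | nil => simp at ha
        | cons w t =>
            have hadj : H.Adj z w := (List.isChain_cons_cons.1 hc).1
            exact hadj.reachable.trans (ih hc.tail rfl a ha)

lemma chain'_reachable {H : SimpleGraph V} {l : List V} (hc : l.Chain' H.Adj) :
    ∀ a ∈ l, ∀ b ∈ l, H.Reachable a b := by
  intro a ha b hb
  cases l with
  | nil => simp at ha
  | cons z xs =>
      exact (chain'_head_reachable hc rfl a ha).symm.trans
        (chain'_head_reachable hc rfl b hb)

lemma wlk_reach (S : Sched1 G s blk) {j : ℕ} (hj : j < S.q) {a b : V}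
    (ha : a ∈ S.wlk j) (hb : b ∈ S.wlk j) : (GS1 S).Reachable a b :=
  chain'_reachable (wlk_chain' S hj) a ha b hb

lemma vacated (S : Sched1 G s blk) : ∀ j, j ≤ S.q → ∀ v, v ∈ blk ∪ {s} →
    v ∉ S.occ j → v ≠ S.main j → ∃ i < j, (S.wlk i).head? = some v := by
  intro j
  induction j with
  | zero =>
      intro _ v hv h1 h2
      exfalso
      rw [S.occ0] at h1
      rw [S.main0] at h2
      rcases hv with h | h
      · exact h1 h
      · exact h2 h
  | succ j ih =>
      intro hj v hv h1 h2
      have hjq : j < S.q := by omega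
      obtain ⟨hch, hnd, hlen, hcase⟩ := S.step j hjq
      by_cases hvj : v ∉ S.occ j ∧ v ≠ S.main j
      · obtain ⟨i, hi, h⟩ := ih (by omega) v hv hvj.1 hvj.2
        exact ⟨i, by omega, h⟩
      · rcases hcase with ⟨hhd, hlst, hoe, hno⟩ | ⟨x, y, hx, hhd, hlst, hoe, hm, hmn, honly⟩
        · have hv1 : v ∉ S.occ j := by rw [← hoe]; exact h1
          have hv2 : v = S.main j := by tauto
          exact ⟨j, by omega, by rw [hhd, hv2]⟩
        · have hv2 : v ≠ S.main j := by rw [← hm]; exact h2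
          have hv1 : v ∈ S.occ j := by tauto
          have hvx : v = x := by
            by_contra hne
            exact h1 (hoe ▸ Set.mem_insert_of_mem _ ⟨hv1, hne⟩)
          exact ⟨j, by omega, by rw [hhd, hvx]⟩

lemma head_of_occupied (S : Sched1 G s blk) {j : ℕ} (hj : j < S.q) {v : V}
    (hv : v ∈ S.wlk j) (hocc : v ∈ blk ∪ {s}) :
    ∃ i < S.q, (S.wlk i).head? = some v := by
  obtain ⟨hch, hnd, hlen, hcase⟩ := S.step j hj
  rcases hcase with ⟨hhd, hlst, hoe, hno⟩ | ⟨x, y, hx, hhd, hlst, hoe, hm, hmn, honly⟩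
  · by_cases hvm : v = S.main j
    · exact ⟨j, hj, by rw [hhd, hvm]⟩
    · obtain ⟨i, hi, h⟩ := vacated S j (by omega) v hocc (hno v hv) hvm
      exact ⟨i, by omega, h⟩
  · by_cases hvx : v = x
    · exact ⟨j, hj, by rw [hhd, hvx]⟩
    · have hvo : v ∉ S.occ j := fun h => hvx (honly v hv h)
      have hvm : v ≠ S.main j := fun h => hmn (h ▸ hv)
      obtain ⟨i, hi, h⟩ := vacated S j (by omega) v hocc hvo hvm
      exact ⟨i, by omega, h⟩

lemma support_get_zero {H : SimpleGraph V} {u v : V} (p : H.Walk u v)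
    (h : 0 < p.support.length) : p.support.get ⟨0, h⟩ = u := by
  cases p <;> rfl

lemma exists_edge_of_mem_support {H : SimpleGraph V} {u v : V} (p : H.Walk u v)
    {x : V} (hx : x ∈ p.support) (hl : 0 < p.length) : ∃ e ∈ p.edges, x ∈ e := by
  induction p with
  | nil => simp at hl
  | cons h q ih =>
      rename_i a b c
      simp only [Walk.support_cons, List.mem_cons] at hx
      rcases hx with rfl | hx
      · exact ⟨s(x, b), by simp, by simp⟩
      · cases q with
        | nil => simp at hx; subst hx; exact ⟨s(a, x), by simp, by simp⟩
        | cons h' q' =>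
            obtain ⟨e, he, hxe⟩ := ih hx (by simp)
            refine ⟨e, ?_, hxe⟩
            simp only [Walk.edges_cons, List.mem_cons] at he ⊢
            tauto

lemma mem_wlk_of_mem_support (S : Sched1 G s blk) {v : V} {u : V}
    (P : (GS1 S).Walk s u) (hl : 0 < P.length) (hv : v ∈ P.support) :
    ∃ j < S.q, v ∈ S.wlk j := by
  obtain ⟨e, he, hve⟩ := exists_edge_of_mem_support P hv hl
  have he' : e ∈ (GS1 S).edgeSet := P.edges_subset_edgeSet he
  rw [GS1, edgeSet_fromEdgeSet] at he'
  obtain ⟨⟨j, hj, hej⟩, -⟩ := he'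
  exact ⟨j, hj, mem_of_listEdges hej v hve⟩

/-- Part 1 core: counting bound on path length. -/
lemma path_length_bound [Fintype V] (I : OneInst V) (S : Sched1 I.G I.s I.blk)
    (lam : ℕ)
    (hfc : ∀ C : (I.G.induce (freeSet I)).ConnectedComponent, C.supp.ncard ≤ lam)
    {v : V} (P : (GS1 S).Walk I.s v) (hP : P.IsPath) :
    P.length ≤ S.q * (lam + 1) := by
  classical
  rcases Nat.eq_zero_or_pos P.length with h0 | hpos
  · simp [h0]
  set L := P.support with hL
  have hnd : L.Nodup := hP.support_nodup
  have hlenL : L.length = P.length + 1 := P.length_support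
  set n := L.length with hn
  have hn1 : 1 ≤ n := by omega
  let Occ : V → Prop := fun x => x ∈ I.blk ∨ x = I.s
  let Oc : Finset (Fin n) := Finset.univ.filter (fun i => Occ (L.get i))
  let Fr : Finset (Fin n) := Finset.univ.filter (fun i => ¬ Occ (L.get i))
  have hsum : Oc.card + Fr.card = n := by
    have := Finset.card_filter_add_card_filter_not
      (s := (Finset.univ : Finset (Fin n))) (p := fun i => Occ (L.get i))
    rw [Finset.card_univ, Fintype.card_fin] at this; exact this
  have hmem : ∀ i : Fin n, ∃ j < S.q, L.get i ∈ S.wlk j := by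
    intro i
    have := List.get_mem L i
    exact mem_wlk_of_mem_support S P hpos (by exact this)
  -- occupied vertices are heads of walks
  have hOc : ∀ i ∈ Oc, ∃ jj < S.q, (S.wlk jj).head? = some (L.get i) := by
    intro i hi
    obtain ⟨j, hj, hij⟩ := hmem i
    have hocc : L.get i ∈ I.blk ∪ {I.s} := by
      have := (Finset.mem_filter.1 hi).2
      rcases this with h | h
      · exact Or.inl h
      · exact Or.inr h
    exact head_of_occupied S hj hij hocc
  let f : Fin n → ℕ := fun i =>
    if h : ∃ jj < S.q, (S.wlk jj).head? = some (L.get i) then h.choose else 0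
  have hcardOc : Oc.card ≤ S.q := by
    have h2 := Finset.card_le_card_of_injOn (s := Oc) f (t := Finset.range S.q) ?_ ?_
    · simpa using h2
    · intro i hi
      have h := hOc i hi
      simp only [f, dif_pos h]
      exact Finset.mem_range.2 h.choose_spec.1
    · intro i hi i' hi' hf
      have h := hOc i hi
      have h' := hOc i' hi'
      have e1 : (S.wlk (f i)).head? = some (L.get i) := by
        simp only [f, dif_pos h]; exact h.choose_spec.2
      have e2 : (S.wlk (f i')).head? = some (L.get i') := by
        simp only [f, dif_pos h']; exact h'.choose_spec.2
      rw [hf, e2] at e1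
      exact (List.Nodup.get_inj_iff hnd).1 (Option.some.inj e1).symm
  -- free vertices
  have hfree : ∀ {a : V}, ¬ Occ a → a ∈ freeSet I := by
    intro a h
    exact ⟨fun hb => h (Or.inl hb), fun hs => h (Or.inr hs)⟩
  let Cmp := (I.G.induce (freeSet I)).ConnectedComponent
  let cmp : Fin n → Option Cmp := fun i =>
    if h : Occ (L.get i) then none
    else some ((I.G.induce (freeSet I)).connectedComponentMk ⟨L.get i, hfree h⟩)
  -- fiber bound
  have hFr1 : Fr.card ≤ lam * (Fr.image cmp).card := by
    apply Finset.card_le_mul_card_image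
    intro a ha
    obtain ⟨i0, hi0, hcmp0⟩ := Finset.mem_image.1 ha
    have h0 := (Finset.mem_filter.1 hi0).2
    set C := (I.G.induce (freeSet I)).connectedComponentMk ⟨L.get i0, hfree h0⟩ with hC
    have haC : a = some C := by rw [← hcmp0]; simp only [cmp, dif_neg h0]; rfl
    have hsupp : (C.supp.toFinset.image Subtype.val).card ≤ lam := by
      calc (C.supp.toFinset.image Subtype.val).card
          ≤ C.supp.toFinset.card := Finset.card_image_le
      _ = C.supp.ncard := (Set.ncard_eq_toFinset_card' _).symm
      _ ≤ lam := hfc C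
    refine le_trans (Finset.card_le_card_of_injOn (fun i => L.get i) ?_ ?_) hsupp
    · intro i hi
      obtain ⟨hiF, hia⟩ := Finset.mem_filter.1 hi
      have hfi := (Finset.mem_filter.1 hiF).2
      have : cmp i = some C := by rw [hia, haC]
      simp only [cmp, dif_neg hfi, Option.some.injEq] at this
      apply Finset.mem_image.2
      refine ⟨⟨L.get i, hfree hfi⟩, ?_, rfl⟩
      rw [Set.mem_toFinset]
      exact this
    · intro i hi i' hi' he
      exact (List.Nodup.get_inj_iff hnd).1 he
  -- number of components hit is at most number of occupied
  have hL0 : L.get ⟨0, by omega⟩ = I.s := support_get_zero P _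
  have hOc0 : (⟨0, by omega⟩ : Fin n) ∈ Oc := by
    apply Finset.mem_filter.2
    exact ⟨Finset.mem_univ _, Or.inr hL0⟩
  have hchainGS : L.Chain' (GS1 S).Adj := P.isChain_adj_support
  have hFr2 : (Fr.image cmp).card ≤ Oc.card := by
    have hne : ∀ a ∈ Fr.image cmp, (Fr.filter (fun i => cmp i = a)).Nonempty := by
      intro a ha
      obtain ⟨i0, hi0, hcmp0⟩ := Finset.mem_image.1 ha
      exact ⟨i0, Finset.mem_filter.2 ⟨hi0, hcmp0⟩⟩
    classical
    let minI : Option Cmp → Fin n := fun a =>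
      if h : a ∈ Fr.image cmp then (Fr.filter (fun i => cmp i = a)).min' (hne a h)
      else ⟨0, by omega⟩
    have hminI : ∀ a ∈ Fr.image cmp, minI a ∈ Fr.filter (fun i => cmp i = a) := by
      intro a ha
      simp only [minI, dif_pos ha]
      exact Finset.min'_mem _ _
    have hmin_ne : ∀ a ∈ Fr.image cmp, (minI a : ℕ) ≠ 0 := by
      intro a ha h0
      have := (Finset.mem_filter.1 (Finset.mem_filter.1 (hminI a ha)).1).2
      apply this
      have : minI a = (⟨0, by omega⟩ : Fin n) := Fin.ext h0
      rw [this, hL0]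
      exact Or.inr rfl
    let pred : Option Cmp → Fin n := fun a => ⟨(minI a : ℕ) - 1, by omega⟩
    have hto : ∀ a ∈ Fr.image cmp, pred a ∈ Oc := by
      intro a ha
      by_contra hnotOc
      have hfp0 : ¬ Occ (L.get (pred a)) := fun h =>
        hnotOc (Finset.mem_filter.2 ⟨Finset.mem_univ _, h⟩)
      have hfr : pred a ∈ Fr := Finset.mem_filter.2 ⟨Finset.mem_univ _, hfp0⟩
      -- adjacency between pred a and minI a
      have hm1 : (minI a : ℕ) - 1 + 1 < n := by
        have := (minI a).2
        have := hmin_ne a ha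
        omega
      have hadjGS : (GS1 S).Adj (L.get ⟨(minI a : ℕ) - 1, by omega⟩)
          (L.get ⟨(minI a : ℕ) - 1 + 1, hm1⟩) :=
        List.isChain_iff_getElem.1 hchainGS _ (by omega)
      have hidx : (⟨(minI a : ℕ) - 1 + 1, hm1⟩ : Fin n) = minI a := by
        have := hmin_ne a ha
        apply Fin.ext
        simp only
        omega
      rw [hidx] at hadjGS
      have hadjG : I.G.Adj (L.get (pred a)) (L.get (minI a)) := (GS_adj_imp hadjGS).1
      have hfp : ¬ Occ (L.get (pred a)) := (Finset.mem_filter.1 hfr).2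
      have hfm : ¬ Occ (L.get (minI a)) :=
        (Finset.mem_filter.1 (Finset.mem_filter.1 (hminI a ha)).1).2
      have hadjInd : (I.G.induce (freeSet I)).Adj ⟨L.get (pred a), hfree hfp⟩
          ⟨L.get (minI a), hfree hfm⟩ := by
        simp only [comap_adj, Function.Embedding.coe_subtype]
        exact hadjG
      have hsame : cmp (pred a) = cmp (minI a) := by
        simp only [cmp, dif_neg hfp, dif_neg hfm, Option.some.injEq]
        exact ConnectedComponent.sound hadjInd.reachable
      have hpa : cmp (pred a) = a := by
        rw [hsame]
        exact (Finset.mem_filter.1 (hminI a ha)).2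
      have hmem2 : pred a ∈ Fr.filter (fun i => cmp i = a) :=
        Finset.mem_filter.2 ⟨hfr, hpa⟩
      have hle : minI a ≤ pred a := by
        have h1 : (Fr.filter (fun i => cmp i = a)).min' (hne a ha) ≤ pred a :=
          Finset.min'_le _ _ hmem2
        simpa only [minI, dif_pos ha] using h1
      have : (minI a : ℕ) ≤ (minI a : ℕ) - 1 := hle
      have := hmin_ne a ha
      omega
    have hinj : Set.InjOn pred (Fr.image cmp) := by
      intro a ha a' ha' he
      have h1 : (minI a : ℕ) = (minI a' : ℕ) := by
        have e1 := hmin_ne a ha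
        have e2 := hmin_ne a' ha'
        have : (minI a : ℕ) - 1 = (minI a' : ℕ) - 1 := congrArg Fin.val he
        omega
      have h2 : minI a = minI a' := Fin.ext h1
      have c1 : cmp (minI a) = a := (Finset.mem_filter.1 (hminI a ha)).2
      have c2 : cmp (minI a') = a' := (Finset.mem_filter.1 (hminI a' ha')).2
      rw [← c1, ← c2, h2]
    exact Finset.card_le_card_of_injOn pred hto hinj
  have : n ≤ S.q * (lam + 1) := by
    calc n = Oc.card + Fr.card := hsum.symm
    _ ≤ Oc.card + lam * Oc.card := by
        have := le_trans hFr1 (Nat.mul_le_mul_left lam hFr2)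
        omega
    _ = Oc.card * (lam + 1) := by ring
    _ ≤ S.q * (lam + 1) := Nat.mul_le_mul_right _ hcardOc
  omega

/-- Deleting a useless blocker move. -/
lemma delete_move (S : Sched1 G s blk) {j : ℕ} (hj : j < S.q) {x y : V}
    (hx : x ∈ S.occ j) (hhd : (S.wlk j).head? = some x)
    (hlst : (S.wlk j).getLast? = some y)
    (hoc : S.occ (j+1) = insert y (S.occ j \ {x}))
    (hm : S.main (j+1) = S.main j) (hmn : S.main j ∉ S.wlk j)
    (honly : ∀ w ∈ S.wlk j, w ∈ S.occ j → w = x)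
    (hxy : ∀ i, j < i → i < S.q → x ∉ S.wlk i ∧ y ∉ S.wlk i) :
    ∃ S' : Sched1 G s blk, S'.q = S.q - 1 ∧ S'.main S'.q = S.main S.q := by
  obtain ⟨hch, hnd, hlen, -⟩ := S.step j hj
  have hxl : x ∈ S.wlk j := head_mem hhd
  have hyl : y ∈ S.wlk j := getLast_mem hlst
  have hxy0 : x ≠ y := head_ne_last hnd hlen hhd hlst
  have hyo : y ∉ S.occ j := fun h => hxy0 (honly y hyl h).symm
  set T : Set V → Set V := fun A => (A \ {y}) ∪ {x} with hT
  have hmemT : ∀ (A : Set V) (w : V), w ∈ T A ↔ ((w ∈ A ∧ w ≠ y) ∨ w = x) := by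
    intro A w
    exact Iff.rfl
  have hTj : T (S.occ (j+1)) = S.occ j := by
    rw [hoc]
    ext w
    simp only [T, Set.mem_union, Set.mem_diff, Set.mem_insert_iff,
      Set.mem_singleton_iff]
    constructor
    · rintro (⟨(rfl | ⟨hw, hwx⟩), hwy⟩ | rfl)
      · exact absurd rfl hwy
      · exact hw
      · exact hx
    · intro hw
      by_cases hwx : w = x
      · exact Or.inr hwx
      · exact Or.inl ⟨Or.inr ⟨hw, hwx⟩, fun h => hyo (h ▸ hw)⟩
  -- invariant
  have hinv : ∀ i, j + 1 ≤ i → i ≤ S.q →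
      y ∈ S.occ i ∧ x ∉ S.occ i ∧ x ≠ S.main i := by
    intro i hi1
    induction i, hi1 using Nat.le_induction with
    | base =>
        intro _
        refine ⟨?_, ?_, ?_⟩
        · rw [hoc]; exact Set.mem_insert _ _
        · rw [hoc]
          simp [Set.mem_insert_iff, hxy0]
        · rw [hm]
          intro he
          exact hmn (he ▸ hxl)
    | succ i hi ih =>
        intro hiq
        obtain ⟨hy1, hx1, hm1⟩ := ih (by omega)
        have hiq' : i < S.q := by omega
        have hnw : x ∉ S.wlk i ∧ y ∉ S.wlk i := hxy i (by omega) hiq'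
        obtain ⟨hch', hnd', hlen', hcase'⟩ := S.step i hiq'
        rcases hcase' with ⟨hhd', hlst', hoe', hno'⟩ |
          ⟨x', y', hx', hhd', hlst', hoe', hm', hmn', honly'⟩
        · refine ⟨hoe' ▸ hy1, hoe' ▸ hx1, ?_⟩
          intro he
          exact hnw.1 (he ▸ getLast_mem hlst')
        · refine ⟨?_, ?_, ?_⟩
          · rw [hoe']
            refine Set.mem_insert_of_mem _ ⟨hy1, ?_⟩
            simp only [Set.mem_singleton_iff]
            intro he
            exact hnw.2 (he ▸ head_mem hhd')
          · rw [hoe']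
            simp only [Set.mem_insert_iff, Set.mem_diff, Set.mem_singleton_iff]
            push_neg
            refine ⟨?_, fun h => absurd h hx1⟩
            intro he
            exact hnw.1 (he ▸ getLast_mem hlst')
          · rw [hm']; exact hm1
  -- transferred steps
  have hstep' : ∀ i, j < i → i < S.q →
      Step1 G (S.main i) (T (S.occ i)) (S.main (i+1)) (T (S.occ (i+1)))
        (S.wlk i) := by
    intro i hji hiq
    have hnw : x ∉ S.wlk i ∧ y ∉ S.wlk i := hxy i hji hiq
    obtain ⟨hy1, hx1, hm1⟩ := hinv i (by omega) (by omega)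
    obtain ⟨hch', hnd', hlen', hcase'⟩ := S.step i hiq
    refine ⟨hch', hnd', hlen', ?_⟩
    rcases hcase' with ⟨hhd', hlst', hoe', hno'⟩ |
      ⟨x', y', hx', hhd', hlst', hoe', hm', hmn', honly'⟩
    · refine Or.inl ⟨hhd', hlst', by rw [hoe'], ?_⟩
      intro w hw
      rw [hmemT]
      push_neg
      refine ⟨fun hwo => absurd hwo (hno' w hw), ?_⟩
      intro he
      exact hnw.1 (he ▸ hw)
    · have hx'l : x' ∈ S.wlk i := head_mem hhd'
      have hy'l : y' ∈ S.wlk i := getLast_mem hlst'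
      have d1 : x ≠ x' := fun h => hnw.1 (h ▸ hx'l)
      have d2 : x ≠ y' := fun h => hnw.1 (h ▸ hy'l)
      have d3 : y ≠ x' := fun h => hnw.2 (h ▸ hx'l)
      have d4 : y ≠ y' := fun h => hnw.2 (h ▸ hy'l)
      refine Or.inr ⟨x', y', ?_, hhd', hlst', ?_, hm', hmn', ?_⟩
      · rw [hmemT]
        exact Or.inl ⟨hx', fun h => d3 h.symm⟩
      · rw [hoe']
        ext w
        rw [hmemT]
        simp only [Set.mem_insert_iff, Set.mem_diff, Set.mem_singleton_iff, hmemT]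
        constructor
        · rintro (⟨(rfl | ⟨hw, hwx'⟩), hwy⟩ | rfl)
          · exact Or.inl rfl
          · exact Or.inr ⟨Or.inl ⟨hw, hwy⟩, hwx'⟩
          · exact Or.inr ⟨Or.inr rfl, d1⟩
        · rintro (rfl | ⟨(⟨hw, hwy⟩ | rfl), hwx'⟩)
          · exact Or.inl ⟨Or.inl rfl, fun h => d4 h.symm⟩
          · exact Or.inl ⟨Or.inr ⟨hw, hwx'⟩, hwy⟩
          · exact Or.inr rfl
      · intro w hw hwT
        rw [hmemT] at hwT
        rcases hwT with ⟨hwo, -⟩ | hwx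
        · exact honly' w hw hwo
        · exact absurd hwx (fun h => hnw.1 (h ▸ hw))
  -- the shortened schedule
  refine ⟨⟨S.q - 1,
    fun i => if i ≤ j then S.main i else S.main (i+1),
    fun i => if i ≤ j then S.occ i else T (S.occ (i+1)),
    fun i => if i < j then S.wlk i else S.wlk (i+1),
    by simp [S.main0], by simp [S.occ0], ?_⟩, rfl, ?_⟩
  · intro i hiq
    by_cases hij : i < j
    · have e1 : i ≤ j := by omega
      have e2 : i + 1 ≤ j := by omega
      simp only [if_pos e1, if_pos e2, if_pos hij]
      exact S.step i (by omega)
    · have e1 : ¬ (i + 1 ≤ j) := by omega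
      have e2 : j < i + 1 := by omega
      have hmi : (if i ≤ j then S.main i else S.main (i+1)) = S.main (i+1) := by
        by_cases h : i ≤ j
        · have : i = j := by omega
          subst this
          rw [if_pos h, hm]
        · rw [if_neg h]
      have hoi : (if i ≤ j then S.occ i else T (S.occ (i+1))) = T (S.occ (i+1)) := by
        by_cases h : i ≤ j
        · have : i = j := by omega
          subst this
          rw [if_pos h, hTj]
        · rw [if_neg h]
      rw [if_neg hij, hmi, hoi]
      simp only [if_neg e1]
      exact hstep' (i+1) e2 (by omega)
  · dsimp only
    by_cases h : S.q - 1 ≤ j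
    · have hj1 : S.q - 1 = j := by omega
      have hj2 : S.q = j + 1 := by omega
      rw [if_pos h, hj1, hj2]
      exact hm.symm
    · rw [if_neg h]
      congr 1
      omega

lemma main_reach (S : Sched1 G s blk) : ∀ j, j ≤ S.q →
    (GS1 S).Reachable s (S.main j) := by
  intro j
  induction j with
  | zero => intro _; rw [S.main0]
  | succ j ih =>
      intro hj
      have hjq : j < S.q := by omega
      obtain ⟨hch, hnd, hlen, hcase⟩ := S.step j hjq
      rcases hcase with ⟨hhd, hlst, hoe, hno⟩ | ⟨x, y, hx, hhd, hlst, hoe, hm, hmn, honly⟩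
      · exact (ih (by omega)).trans
          (wlk_reach S hjq (head_mem hhd) (getLast_mem hlst))
      · rw [hm]; exact ih (by omega)

lemma all_reach (I : OneInst V) (S : Sched1 I.G I.s I.blk) (hsol : Sol1 I S)
    (hmin : ∀ S' : Sched1 I.G I.s I.blk, Sol1 I S' → S.q ≤ S'.q) :
    ∀ j < S.q, ∀ v ∈ S.wlk j, (GS1 S).Reachable I.s v := by
  have key : ∀ d j, j < S.q → S.q - j ≤ d → ∀ v ∈ S.wlk j,
      (GS1 S).Reachable I.s v := by
    intro d
    induction d with
    | zero => intro j hj hd; omega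
    | succ d ih =>
        intro j hj hd v hv
        obtain ⟨hch, hnd, hlen, hcase⟩ := S.step j hj
        rcases hcase with ⟨hhd, hlst, hoe, hno⟩ |
          ⟨x, y, hx, hhd, hlst, hoe, hm, hmn, honly⟩
        · exact (main_reach S j (le_of_lt hj)).trans
            (wlk_reach S hj (head_mem hhd) hv)
        · by_cases hint : ∃ i, j < i ∧ i < S.q ∧ (x ∈ S.wlk i ∨ y ∈ S.wlk i)
          · obtain ⟨i, hji, hiq, hz⟩ := hint
            rcases hz with hz | hz
            · exact (ih i hiq (by omega) x hz).trans
                (wlk_reach S hj (head_mem hhd) hv)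
            · exact (ih i hiq (by omega) y hz).trans
                (wlk_reach S hj (getLast_mem hlst) hv)
          · exfalso
            push_neg at hint
            obtain ⟨S', hq', hmain'⟩ := delete_move S hj hx hhd hlst hoe hm hmn honly
              (fun i h1 h2 => hint i h1 h2)
            have hsol' : Sol1 I S' :=
              ⟨by rw [hq']; have := hsol.1; omega, by rw [hmain', hsol.2]⟩
            have := hmin S' hsol'
            omega
  intro j hj v hv
  exact key S.q j hj (by omega) v hv

end CSMPAux

/-- Let `(G, s, t, ℓ, R)` be a YES-instance of CSMP-1 with
`s ≠ t` in which every free component has at most `lam` vertices (the main robot's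
starting vertex `s` being counted as occupied).  If `S` is a solution with the
minimum number of moves, then every path in `G_S` that starts at `s` has length at
most `ℓ·(lam+1)`; consequently every vertex of `G_S` is at distance at most
`ℓ·(lam+1)` from `s` in `G`. -/
theorem solution_graph_small_radius [Fintype V] (I : OneInst V) (hval : I.Valid)
    (hst : I.s ≠ I.t) (lam : ℕ)
    (hfc : ∀ C : (I.G.induce (freeSet I)).ConnectedComponent, C.supp.ncard ≤ lam)
    (S : Sched1 I.G I.s I.blk) (hsol : Sol1 I S)
    (hmin : ∀ S' : Sched1 I.G I.s I.blk, Sol1 I S' → S.q ≤ S'.q) :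
    (∀ (v : V) (w : (GS1 S).Walk I.s v), w.IsPath → w.length ≤ I.ell * (lam + 1)) ∧
    (∀ v ∈ (GS1 S).support, I.G.dist I.s v ≤ I.ell * (lam + 1)) := by
  have part1 : ∀ (v : V) (w : (GS1 S).Walk I.s v), w.IsPath →
      w.length ≤ I.ell * (lam + 1) := by
    intro v w hw
    calc w.length ≤ S.q * (lam + 1) := path_length_bound I S lam hfc w hw
    _ ≤ I.ell * (lam + 1) := Nat.mul_le_mul_right _ hsol.1
  refine ⟨part1, ?_⟩
  intro v hv
  obtain ⟨u, hadj⟩ := hv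
  obtain ⟨-, j, hj, hvj, -⟩ := GS_adj_imp hadj
  have hreach : (GS1 S).Reachable I.s v := all_reach I S hsol hmin j hj v hvj
  obtain ⟨p⟩ := hreach
  have hlen : p.toPath.1.length ≤ I.ell * (lam + 1) := part1 v p.toPath.1 p.toPath.2
  calc I.G.dist I.s v ≤ (p.toPath.1.mapLe (GS_le S)).length := I.G.dist_le _
  _ = p.toPath.1.length := Walk.length_map _ _
  _ ≤ I.ell * (lam + 1) := hlen
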